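/- If there exists an ℵ₁-Kurepa tree with exactly κ cofinal branches (κ ≥ ℵ₂), then the sentence ψ has a maximal model of cardinality κ, where maximal means it has no proper extension among models of ψ. -/

import Mathlib

open Cardinal

/-- A set-theoretic tree: a transitive well-founded relation in which the
predecessors of any element are linearly ordered. -/
structure STree : Type 1 where
  σ : Type
  lt : σ → σ → Prop
  lt_trans : ∀ a b c, lt a b → lt b c → lt a c
  wf : WellFounded lt
  pred_linear : ∀ c a b, lt a c → lt b c → a = b ∨ lt a b ∨ lt b a

/-- The level (rank) of a node of a tree. -/
noncomputable def STree.rank (T : STree) (x : T.σ) : Ordinal := (T.wf.apply x).rank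

/-- A cofinal branch of height `κ`: a downward-closed chain meeting every level below `κ.ord`. -/
def STree.IsCofBranch (T : STree) (κ : Cardinal) (B : Set T.σ) : Prop :=
  (∀ x ∈ B, ∀ y, T.lt y x → y ∈ B) ∧
  (∀ x ∈ B, ∀ y ∈ B, x = y ∨ T.lt x y ∨ T.lt y x) ∧
  (∀ o : Ordinal, o < κ.ord → ∃ x ∈ B, T.rank x = o)

/-- The number of cofinal branches of height `κ`. -/
noncomputable def STree.branchCard (T : STree) (κ : Cardinal) : Cardinal :=
  #{B : Set T.σ // T.IsCofBranch κ B}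

/-- A `κ`-Kurepa tree: height `κ`, levels of size `< κ`, and at least `κ⁺` cofinal branches. -/
def IsKurepaTree (κ : Cardinal) (T : STree) : Prop :=
  ℵ₀ ≤ κ ∧
  (∀ x : T.σ, T.rank x < κ.ord) ∧
  (∀ o : Ordinal, o < κ.ord → ∃ x : T.σ, T.rank x = o) ∧
  (∀ o : Ordinal, #{x : T.σ // T.rank x = o} < κ) ∧
  Order.succ κ ≤ T.branchCard κ

/-- A model of the sentence `ψ`: a tree whose levels are indexed by an ℵ₁-like linear
order `L` with a maximum element `⊤`; `V a` is the (countable, for `a ≠ ⊤`) set of nodes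
at level `a`, and `V ⊤` is the set of maximal branches. -/
structure PsiModel : Type 1 where
  L : Type
  [linL : LinearOrder L]
  [topL : OrderTop L]
  alephOneLike : ∀ a : L, a ≠ ⊤ → (Set.Iic a).Countable
  V : L → Type
  level_countable : ∀ a : L, a ≠ ⊤ → Countable (V a)
  level_nonempty : ∀ a : L, Nonempty (V a)
  tlt : (Σ a : L, V a) → (Σ a : L, V a) → Prop
  tlt_level : ∀ x y, tlt x y → x.1 < y.1
  tlt_trans : ∀ x y z, tlt x y → tlt y z → tlt x z
  tlt_total : ∀ x y z, tlt x z → tlt y z → x.1 < y.1 → tlt x y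
  tlt_below : ∀ (x : Σ a : L, V a) (b : L), b < x.1 → ∃ y : V b, tlt ⟨b, y⟩ x
  pruned : ∀ x : Σ a : L, V a, x.1 ≠ ⊤ → ∃ y : V ⊤, tlt x ⟨⊤, y⟩
  branch_unique : ∀ x y : V ⊤, (∀ z, tlt z ⟨⊤, x⟩ ↔ tlt z ⟨⊤, y⟩) → x = y

attribute [instance] PsiModel.linL PsiModel.topL

/-- The cardinality of a model of `ψ` (the universe is `P ∪ L ∪ V` with `P` countably
infinite). -/
noncomputable def PsiModel.card (M : PsiModel) : Cardinal :=
  ℵ₀ + #M.L + #(Σ a : M.L, M.V a)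

/-- A substructure embedding between models of `ψ`, incorporating the derived properties:
the level order of the smaller model is an initial segment of that of the larger one,
non-maximal levels agree, and the tree order is preserved. -/
structure PsiEmbed (M N : PsiModel) where
  fL : M.L → N.L
  fL_mono : StrictMono fL
  fL_init : ∀ (a : M.L) (c : N.L), c ≤ fL a → ∃ b : M.L, fL b = c
  fV : ∀ a : M.L, M.V a → N.V (fL a)
  fV_inj : ∀ a : M.L, Function.Injective (fV a)
  fV_surj : ∀ a : M.L, a ≠ ⊤ → Function.Surjective (fV a)
  tlt_iff : ∀ x y : (Σ a : M.L, M.V a),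
    M.tlt x y ↔ N.tlt ⟨fL x.1, fV x.1 x.2⟩ ⟨fL y.1, fV y.1 y.2⟩

/-- The induced map on nodes. -/
def PsiEmbed.map {M N : PsiModel} (e : PsiEmbed M N) (x : Σ a : M.L, M.V a) :
    Σ a : N.L, N.V a := ⟨e.fL x.1, e.fV x.1 x.2⟩

/-- A model of `ψ` is maximal if it has no proper extension: every embedding into another
model of `ψ` is onto. -/
def PsiModel.MaximalModel (M : PsiModel) : Prop :=
  ∀ (N : PsiModel) (e : PsiEmbed M N),
    Function.Surjective e.fL ∧ ∀ a : M.L, Function.Surjective (e.fV a)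

/-!
Let `T` be an `ℵ₁`-Kurepa tree with `κ` cofinal branches. The model of `ψ` has as levels the
countable ordinals followed by a top level; level `α` holds the nodes of `T` of rank `α` lying on
some cofinal branch, and the top level holds the cofinal branches themselves. It has `ℵ₁` levels,
countable non-top levels and `κ` branches, so its size is `κ`.

It is maximal: the top level has uncountably many predecessors, so an embedding sends it to the
top level of the extension, and hence adds no level and no node below the top. A new top element
`w` would be determined by the nodes below it; these are all nodes of `T`, and they form a
cofinal branch of `T` whose image is `w`.
-/

namespace STree

variable (T : STree)

lemma rank_lt_rank {x y : T.σ} (h : T.lt x y) : T.rank x < T.rank y :=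
  Acc.rank_lt_of_rel (T.wf.apply y) h

lemma exists_lt_rank_eq (x : T.σ) {o : Ordinal} (ho : o < T.rank x) :
    ∃ y, T.lt y x ∧ T.rank y = o := by
  induction x using T.wf.induction generalizing o with
  | _ x ih =>
    rw [STree.rank, Acc.rank_eq, Ordinal.lt_iSup_iff] at ho
    obtain ⟨⟨y, hyx⟩, ho⟩ := ho
    rcases (Order.lt_succ_iff.mp ho).eq_or_lt with rfl | ho
    · exact ⟨y, hyx, rfl⟩
    · obtain ⟨z, hzy, rfl⟩ := ih y hyx ho
      exact ⟨z, T.lt_trans _ _ _ hzy hyx, rfl⟩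

variable {T}

lemma lt_of_rank_lt {u v : T.σ} (h : u = v ∨ T.lt u v ∨ T.lt v u) (hr : T.rank u < T.rank v) :
    T.lt u v := by
  rcases h with rfl | h | h
  · exact absurd hr (lt_irrefl _)
  · exact h
  · exact absurd (T.rank_lt_rank h) hr.not_gt

end STree

/-- `ω₁` as a type in `Type`, as `PsiModel.L` requires (`Set.Iio ω₁` lives in `Type 1`). -/
abbrev Omega1 : Type := (aleph 1).ord.ToType

namespace Omega1

noncomputable def toOrdinal (α : Omega1) : Ordinal := (Ordinal.ToType.mk.symm α : Ordinal)

noncomputable def ofOrdinal (o : Ordinal) (ho : o < (aleph 1).ord) : Omega1 :=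
  Ordinal.ToType.mk ⟨o, ho⟩

lemma toOrdinal_lt (α : Omega1) : toOrdinal α < (aleph 1).ord :=
  (Ordinal.ToType.mk.symm α).2

lemma toOrdinal_lt_toOrdinal {α β : Omega1} : toOrdinal α < toOrdinal β ↔ α < β := by
  simp [toOrdinal, Subtype.coe_lt_coe]

lemma toOrdinal_injective : Function.Injective toOrdinal := fun _ _ h =>
  Ordinal.ToType.mk.symm.injective (Subtype.ext h)

@[simp] lemma toOrdinal_ofOrdinal (o : Ordinal) (ho : o < (aleph 1).ord) :
    toOrdinal (ofOrdinal o ho) = o := by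
  simp [toOrdinal, ofOrdinal]

lemma mk_eq : #Omega1 = aleph 1 := mk_ord_toType _

instance : Uncountable Omega1 := by
  rw [← Cardinal.aleph0_lt_mk_iff, mk_eq]
  exact aleph0_lt_aleph_one

instance : NoMaxOrder Omega1 := Cardinal.noMaxOrder (aleph0_le_aleph 1)

lemma countable_Iic (α : Omega1) : (Set.Iic α).Countable := by
  rw [← Set.Iio_insert]
  refine .insert _ (le_aleph0_iff_set_countable.mp (lt_aleph_one_iff.mp ?_))
  simpa [mk_eq] using Cardinal.mk_Iio_lt α (by simp)

lemma mk_withTop : #(WithTop Omega1) = aleph 1 := by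
  rw [WithTop, mk_option, mk_eq, add_one_eq (aleph0_le_aleph 1)]

end Omega1

namespace KurepaModel

open Omega1

variable (T : STree)

def IsPruned (t : T.σ) : Prop := ∃ B, T.IsCofBranch (aleph 1) B ∧ t ∈ B

def Node (α : Omega1) : Type := {t : T.σ // IsPruned T t ∧ T.rank t = toOrdinal α}

def Branch : Type := {B : Set T.σ // T.IsCofBranch (aleph 1) B}

def Level : WithTop Omega1 → Type
  | ⊤ => Branch T
  | (α : Omega1) => Node T α

def lt : (Σ a, Level T a) → (Σ a, Level T a) → Prop
  | ⟨(_ : Omega1), u⟩, ⟨(_ : Omega1), v⟩ => T.lt u.1 v.1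
  | ⟨(_ : Omega1), u⟩, ⟨⊤, B⟩ => u.1 ∈ B.1
  | ⟨⊤, _⟩, _ => False

variable {T}

lemma IsPruned.of_lt {s t : T.σ} (ht : IsPruned T t) (hst : T.lt s t) : IsPruned T s :=
  let ⟨B, hB, htB⟩ := ht
  ⟨B, hB, hB.1 t htB s hst⟩

def Node.toSigma {α : Omega1} (u : Node T α) : Σ a, Level T a := ⟨α, u⟩

def Branch.toSigma (B : Branch T) : Σ a, Level T a := ⟨⊤, B⟩

lemma sigma_cases (x : Σ a, Level T a) :
    (∃ (α : Omega1) (u : Node T α), x = u.toSigma) ∨ ∃ B : Branch T, x = B.toSigma := by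
  obtain ⟨a, u⟩ := x
  induction a using WithTop.recTopCoe with
  | top => exact .inr ⟨u, rfl⟩
  | coe α => exact .inl ⟨α, u, rfl⟩

lemma Node.toSigma_eq_of_val_eq {α β : Omega1} {u : Node T α} {v : Node T β}
    (h : u.1 = v.1) : u.toSigma = v.toSigma := by
  obtain rfl : α = β := toOrdinal_injective (by rw [← u.2.2, ← v.2.2, h])
  rw [Subtype.ext h]

lemma Node.rank_lt_rank_iff {α β : Omega1} (u : Node T α) (v : Node T β) :
    T.rank u.1 < T.rank v.1 ↔ α < β := by
  rw [u.2.2, v.2.2, toOrdinal_lt_toOrdinal]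

noncomputable def nodeOf (t : T.σ) (ht : IsPruned T t) (hr : T.rank t < (aleph 1).ord) :
    Node T (ofOrdinal _ hr) :=
  ⟨t, ht, (toOrdinal_ofOrdinal _ hr).symm⟩

lemma lt_level {x y : Σ a, Level T a} (h : lt T x y) : x.1 < y.1 := by
  rcases sigma_cases x with ⟨α, u, rfl⟩ | ⟨B, rfl⟩
  · rcases sigma_cases y with ⟨β, v, rfl⟩ | ⟨C, rfl⟩
    · exact WithTop.coe_lt_coe.mpr ((u.rank_lt_rank_iff v).mp (T.rank_lt_rank h))
    · exact WithTop.coe_lt_top α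
  · exact h.elim

lemma lt_trans {x y z : Σ a, Level T a} (hxy : lt T x y) (hyz : lt T y z) : lt T x z := by
  rcases sigma_cases x with ⟨α, u, rfl⟩ | ⟨B, rfl⟩
  · rcases sigma_cases y with ⟨β, v, rfl⟩ | ⟨C, rfl⟩
    · rcases sigma_cases z with ⟨γ, w, rfl⟩ | ⟨D, rfl⟩
      · exact T.lt_trans _ _ _ hxy hyz
      · exact D.2.1 v.1 hyz u.1 hxy
    · exact hyz.elim
  · exact hxy.elim

lemma lt_total {x y z : Σ a, Level T a} (hxz : lt T x z) (hyz : lt T y z) (hxy : x.1 < y.1) :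
    lt T x y := by
  rcases sigma_cases x with ⟨α, u, rfl⟩ | ⟨B, rfl⟩
  · rcases sigma_cases y with ⟨β, v, rfl⟩ | ⟨C, rfl⟩
    · have hr : T.rank u.1 < T.rank v.1 := (u.rank_lt_rank_iff v).mpr (WithTop.coe_lt_coe.mp hxy)
      rcases sigma_cases z with ⟨γ, w, rfl⟩ | ⟨D, rfl⟩
      · exact STree.lt_of_rank_lt (T.pred_linear w.1 u.1 v.1 hxz hyz) hr
      · exact STree.lt_of_rank_lt (D.2.2.1 u.1 hxz v.1 hyz) hr
    · exact hyz.elim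
  · exact hxz.elim

lemma exists_lt_of_lt_level (x : Σ a, Level T a) {b : WithTop Omega1} (hb : b < x.1) :
    ∃ y : Level T b, lt T ⟨b, y⟩ x := by
  obtain ⟨β, rfl⟩ := WithTop.ne_top_iff_exists.mp hb.ne_top
  rcases sigma_cases x with ⟨α, u, rfl⟩ | ⟨B, rfl⟩
  · have hβ : toOrdinal β < T.rank u.1 := by
      rw [u.2.2, toOrdinal_lt_toOrdinal]; exact WithTop.coe_lt_coe.mp hb
    obtain ⟨y, hyu, hy⟩ := T.exists_lt_rank_eq u.1 hβ
    exact ⟨⟨y, u.2.1.of_lt hyu, hy⟩, hyu⟩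
  · obtain ⟨y, hyB, hy⟩ := B.2.2.2 (toOrdinal β) (toOrdinal_lt β)
    exact ⟨⟨y, ⟨B.1, B.2, hyB⟩, hy⟩, hyB⟩

lemma exists_branch_gt (x : Σ a, Level T a) (hx : x.1 ≠ ⊤) :
    ∃ B : Level T ⊤, lt T x ⟨⊤, B⟩ := by
  rcases sigma_cases x with ⟨α, u, rfl⟩ | ⟨B, rfl⟩
  · obtain ⟨B, hB, huB⟩ := u.2.1
    exact ⟨⟨B, hB⟩, huB⟩
  · exact absurd rfl hx

lemma Branch.ext_of_lt_iff (hrank : ∀ t : T.σ, T.rank t < (aleph 1).ord) (B C : Branch T)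
    (h : ∀ x, lt T x B.toSigma ↔ lt T x C.toSigma) : B = C := by
  have subset : ∀ B C : Branch T, (∀ x, lt T x B.toSigma → lt T x C.toSigma) → B.1 ⊆ C.1 :=
    fun B C h t htB => h (nodeOf t ⟨B.1, B.2, htB⟩ (hrank t)).toSigma htB
  exact Subtype.ext ((subset B C fun x => (h x).mp).antisymm (subset C B fun x => (h x).mpr))

lemma alephOneLike (a : WithTop Omega1) (ha : a ≠ ⊤) : (Set.Iic a).Countable := by
  obtain ⟨α, rfl⟩ := WithTop.ne_top_iff_exists.mp ha
  rw [WithTop.Iic_coe]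
  exact (countable_Iic α).image _

lemma level_countable (hlevel : ∀ o, #{t : T.σ // T.rank t = o} < aleph 1)
    (a : WithTop Omega1) (ha : a ≠ ⊤) : Countable (Level T a) := by
  obtain ⟨α, rfl⟩ := WithTop.ne_top_iff_exists.mp ha
  have hle : #(Node T α) ≤ #{t : T.σ // T.rank t = toOrdinal α} :=
    mk_le_of_injective (f := fun u => ⟨u.1, u.2.2⟩) fun _ _ h => Subtype.ext (Subtype.mk_eq_mk.mp h)
  exact mk_le_aleph0_iff.mp (lt_aleph_one_iff.mp (hle.trans_lt (hlevel _)))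

lemma level_nonempty (hB : Nonempty (Branch T)) (a : WithTop Omega1) : Nonempty (Level T a) := by
  obtain ⟨B, hB⟩ := hB
  induction a using WithTop.recTopCoe with
  | top => exact ⟨⟨B, hB⟩⟩
  | coe α =>
    obtain ⟨t, htB, ht⟩ := hB.2.2 (toOrdinal α) (toOrdinal_lt α)
    exact ⟨⟨t, ⟨B, hB, htB⟩, ht⟩⟩

lemma nonempty_branch (hT : IsKurepaTree (aleph 1) T) :
    Nonempty (Branch T) := by
  rw [← mk_ne_zero_iff]
  exact ((Order.lt_succ (aleph 1)).trans_le hT.2.2.2.2).ne_bot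

end KurepaModel

namespace PsiEmbed

variable {M N : PsiModel} (e : PsiEmbed M N)

lemma map_lt_map_iff {x y : Σ a, M.V a} : N.tlt (e.map x) (e.map y) ↔ M.tlt x y :=
  (e.tlt_iff x y).symm

/-- An uncountable level order cannot sit below a level with countably many predecessors. -/
lemma fL_top [Uncountable M.L] : e.fL ⊤ = ⊤ := by
  by_contra h
  have hmaps : Set.MapsTo e.fL Set.univ (Set.Iic (e.fL ⊤)) := fun a _ => e.fL_mono.monotone le_top
  exact not_countable (α := M.L) (Set.countable_univ_iff.mp
    (hmaps.countable_of_injOn e.fL_mono.injective.injOn (N.alephOneLike _ h)))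

lemma surjective_fL [Uncountable M.L] : Function.Surjective e.fL :=
  fun c => e.fL_init ⊤ c (e.fL_top ▸ le_top)

lemma exists_map_eq {z : Σ c, N.V c} (hz : z.1 < e.fL ⊤) :
    ∃ x : Σ a, M.V a, x.1 ≠ ⊤ ∧ e.map x = z := by
  obtain ⟨c, v⟩ := z
  obtain ⟨a, rfl⟩ := e.fL_init ⊤ c hz.le
  have ha : a ≠ ⊤ := by rintro rfl; exact lt_irrefl _ hz
  obtain ⟨u, rfl⟩ := e.fV_surj a ha v
  exact ⟨⟨a, u⟩, ha, rfl⟩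

lemma surjective_fV_top [Uncountable M.L]
    (h : ∀ w : N.V (e.fL ⊤), ∃ B : M.V ⊤, ∀ x : Σ a, M.V a, x.1 ≠ ⊤ →
      (M.tlt x ⟨⊤, B⟩ ↔ N.tlt (e.map x) ⟨e.fL ⊤, w⟩)) :
    Function.Surjective (e.fV ⊤) := by
  have branch_unique : ∀ (c : N.L), c = ⊤ → ∀ w₁ w₂ : N.V c,
      (∀ z, N.tlt z ⟨c, w₁⟩ ↔ N.tlt z ⟨c, w₂⟩) → w₁ = w₂ := by
    rintro c rfl
    exact N.branch_unique
  intro w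
  obtain ⟨B, hB⟩ := h w
  refine ⟨B, branch_unique _ e.fL_top _ _ fun z => ?_⟩
  constructor <;> intro hz <;> obtain ⟨x, hx, rfl⟩ := e.exists_map_eq (N.tlt_level _ _ hz)
  · exact (hB x hx).mp ((e.map_lt_map_iff (y := ⟨⊤, B⟩)).mp hz)
  · exact (e.map_lt_map_iff (y := ⟨⊤, B⟩)).mpr ((hB x hx).mpr hz)

end PsiEmbed

open KurepaModel Omega1

noncomputable def kurepaModel (T : STree) (hT : IsKurepaTree (aleph 1) T) : PsiModel where
  L := WithTop Omega1
  alephOneLike := alephOneLike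
  V := Level T
  level_countable := level_countable hT.2.2.2.1
  level_nonempty := level_nonempty (nonempty_branch hT)
  tlt := KurepaModel.lt T
  tlt_level _ _ := lt_level
  tlt_trans _ _ _ := KurepaModel.lt_trans
  tlt_total _ _ _ := lt_total
  tlt_below := exists_lt_of_lt_level
  pruned := exists_branch_gt
  branch_unique := Branch.ext_of_lt_iff hT.2.1

section

variable {T : STree}

lemma card_kurepaModel (hT : IsKurepaTree (aleph 1) T) :
    (kurepaModel T hT).card = T.branchCard (aleph 1) := by
  set b := T.branchCard (aleph 1)
  have hb : aleph 1 ≤ b := (Order.le_succ _).trans hT.2.2.2.2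
  have hb0 : ℵ₀ ≤ b := (aleph0_le_aleph 1).trans hb
  have hlevel : ∀ a, #(Level T a) ≤ b := by
    intro a
    induction a using WithTop.recTopCoe with
    | top => exact le_rfl
    | coe α =>
      exact (mk_le_aleph0_iff.mpr (level_countable hT.2.2.2.1 _ WithTop.coe_ne_top)).trans hb0
  have hsigma : #(Σ a, Level T a) = b := by
    refine le_antisymm ?_ ?_
    · calc #(Σ a, Level T a) ≤ #(WithTop Omega1) * b := by
            rw [mk_sigma, ← sum_const']; exact sum_le_sum _ _ hlevel
        _ = b := by rw [mk_withTop]; exact mul_eq_right hb0 hb (aleph_pos 1).ne'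
    · exact mk_le_of_injective (f := Branch.toSigma) fun _ _ h => eq_of_heq (Sigma.mk.inj h).2
  change ℵ₀ + #(WithTop Omega1) + #(Σ a, Level T a) = b
  rw [hsigma, mk_withTop, add_eq_right (aleph0_le_aleph 1) (aleph0_le_aleph 1), add_eq_right hb0 hb]

section Maximality

variable {hT : IsKurepaTree (aleph 1) T} {N : PsiModel} (e : PsiEmbed (kurepaModel T hT) N)
  (w : N.V (e.fL ⊤))

def branchBelow : Set T.σ :=
  {t | ∃ (α : Omega1) (u : Node T α), u.1 = t ∧ N.tlt (e.map u.toSigma) ⟨e.fL ⊤, w⟩}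

lemma mem_branchBelow_iff {α : Omega1} (u : Node T α) :
    u.1 ∈ branchBelow e w ↔ N.tlt (e.map u.toSigma) ⟨e.fL ⊤, w⟩ := by
  refine ⟨?_, fun h => ⟨α, u, rfl, h⟩⟩
  rintro ⟨β, v, hvu, hv⟩
  rwa [Node.toSigma_eq_of_val_eq hvu] at hv

/-- Two nodes below `w` lie below a common node of `T` at a higher level, hence are comparable. -/
lemma comparable_of_mem_branchBelow {s t : T.σ} (hs : s ∈ branchBelow e w)
    (ht : t ∈ branchBelow e w) : s = t ∨ T.lt s t ∨ T.lt t s := by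
  obtain ⟨α, u, rfl, hu⟩ := hs
  obtain ⟨β, v, rfl, hv⟩ := ht
  obtain ⟨γ, hγ⟩ := exists_gt (max α β)
  obtain ⟨y, hy⟩ :=
    N.tlt_below ⟨e.fL ⊤, w⟩ (e.fL (γ : WithTop Omega1)) (e.fL_mono (WithTop.coe_lt_top γ))
  obtain ⟨x, rfl⟩ := e.fV_surj (γ : WithTop Omega1) WithTop.coe_ne_top y
  have lt_x : ∀ {δ : Omega1} (r : Node T δ), δ < γ →
      N.tlt (e.map r.toSigma) ⟨e.fL ⊤, w⟩ → T.lt r.1 x.1 := fun r hr hrw =>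
    (e.map_lt_map_iff (x := r.toSigma) (y := ⟨(γ : WithTop Omega1), x⟩)).mp
      (N.tlt_total _ _ _ hrw hy (e.fL_mono (WithTop.coe_lt_coe.mpr hr)))
  exact T.pred_linear x.1 u.1 v.1 (lt_x u ((le_max_left α β).trans_lt hγ) hu)
    (lt_x v ((le_max_right α β).trans_lt hγ) hv)

lemma isCofBranch_branchBelow : T.IsCofBranch (aleph 1) (branchBelow e w) := by
  refine ⟨?_, fun s hs t ht => comparable_of_mem_branchBelow e w hs ht, ?_⟩
  · rintro t ⟨α, u, rfl, hu⟩ s hs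
    let v := nodeOf s (u.2.1.of_lt hs) (hT.2.1 s)
    have hvu : N.tlt (e.map v.toSigma) (e.map u.toSigma) :=
      (e.map_lt_map_iff (x := v.toSigma) (y := u.toSigma)).mpr hs
    exact ⟨_, v, rfl, N.tlt_trans _ _ _ hvu hu⟩
  · intro o ho
    obtain ⟨y, hy⟩ := N.tlt_below ⟨e.fL ⊤, w⟩ _ (e.fL_mono (WithTop.coe_lt_top (ofOrdinal o ho)))
    obtain ⟨u, rfl⟩ := e.fV_surj _ WithTop.coe_ne_top y
    exact ⟨u.1, ⟨_, u, rfl, hy⟩, u.2.2.trans (toOrdinal_ofOrdinal o ho)⟩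

end Maximality

theorem maximalModel_kurepaModel (hT : IsKurepaTree (aleph 1) T) :
    (kurepaModel T hT).MaximalModel := by
  intro N e
  have : Uncountable (kurepaModel T hT).L := inferInstanceAs (Uncountable (WithTop Omega1))
  refine ⟨e.surjective_fL, fun a => ?_⟩
  rcases eq_or_ne a ⊤ with rfl | ha
  · refine e.surjective_fV_top fun w => ⟨⟨_, isCofBranch_branchBelow e w⟩, fun x hx => ?_⟩
    rcases sigma_cases x with ⟨α, u, rfl⟩ | ⟨B, rfl⟩
    · exact mem_branchBelow_iff e w u
    · exact absurd rfl hx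
  · exact e.fV_surj a ha

end

theorem stmt14_general (κ : Cardinal)
    (T : STree) (hT : IsKurepaTree (aleph 1) T)
    (hb : T.branchCard (aleph 1) = κ) :
    ∃ M : PsiModel, M.card = κ ∧ M.MaximalModel :=
  ⟨kurepaModel T hT, hb ▸ card_kurepaModel hT, maximalModel_kurepaModel hT⟩

/-- If there is an `ℵ₁`-Kurepa tree with exactly `κ ≥ ℵ₂` cofinal branches, then `ψ` has a
maximal model of cardinality `κ`. -/
theorem stmt14 (κ : Cardinal) (hκ : aleph 2 ≤ κ)
    (T : STree) (hT : IsKurepaTree (aleph 1) T)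
    (hb : T.branchCard (aleph 1) = κ) :
    ∃ M : PsiModel, M.card = κ ∧ M.MaximalModel :=
  stmt14_general κ T hT hb
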